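/- arXiv:1909.00320 — 2 statements merged into one kernel-verified Lean document; each statement's English description precedes it below -/
import Mathlib

section
/- Let Q be a probability measure on the unit sphere S^m ⊂ ℝ^{m+1} whose second moment matrix μ = ∫ x xᵀ Q(dx) has a simple smallest eigenvalue λ(1) with unit eigenvector γ(1). Then the set of unit vectors maximizing the Fréchet function F(p) = ∫ ‖p pᵀ − x xᵀ‖₀² Q(dx) is exactly {γ(1), −γ(1)}; that is, Q is α-VW-nonfocal and its VW antimean is the unique point αμ_{j,E}(Q) = [γ(1)] ∈ ℝP^m, which equals j⁻¹(P_{F,j}(μ)). -/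
/-!
For unit vectors `p` and `x`, `‖p pᵀ - x xᵀ‖₀² = 2 - 2 (p ⬝ x)²`, and integrating against `Q`
gives `F(p) = 2 - 2 pᵀ μ p` with `μ` the second moment matrix of `Q`. Likewise
`‖p pᵀ - μ‖₀² = 1 - 2 pᵀ μ p + Tr(μ²)`. Both maximization problems therefore amount to minimizing
the Rayleigh quotient `pᵀ μ p` on the unit sphere. Since `μ - λ(1) I` is positive semidefinite,
the minimum is `λ(1)`, attained exactly on the unit eigenvectors of `λ(1)`, i.e. at `±γ(1)`,
and `γ γᵀ = (-γ)(-γ)ᵀ`.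
-/

open Matrix MeasureTheory

section Trace

variable {n : Type*} [Fintype n]

lemma trace_sq_vecMulVec_sub_vecMulVec (p x : n → ℝ) :
    trace ((vecMulVec p p - vecMulVec x x) * (vecMulVec p p - vecMulVec x x))
      = (p ⬝ᵥ p) ^ 2 - 2 * (p ⬝ᵥ x) ^ 2 + (x ⬝ᵥ x) ^ 2 := by
  simp [sub_mul, mul_sub, vecMulVec_mul_vecMulVec, dotProduct_comm x p]
  ring

lemma trace_sq_vecMulVec_sub (y : n → ℝ) (μ : Matrix n n ℝ) :
    trace ((vecMulVec y y - μ) * (vecMulVec y y - μ))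
      = (y ⬝ᵥ y) ^ 2 - 2 * (y ⬝ᵥ (μ *ᵥ y)) + trace (μ * μ) := by
  rw [sub_mul, mul_sub, mul_sub, trace_sub, trace_sub, trace_sub, vecMulVec_mul_vecMulVec,
    mul_vecMulVec, vecMulVec_mul, trace_vecMulVec, trace_vecMulVec, trace_vecMulVec,
    dotProduct_smul, dotProduct_comm y (y ᵥ* μ), ← dotProduct_mulVec, dotProduct_comm (μ *ᵥ y)]
  simp only [smul_eq_mul]
  ring

end Trace

section Rayleigh

variable {n : Type*} [Fintype n] {μ : Matrix n n ℝ} {lam : ℝ}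

def rayleighArgmin (μ : Matrix n n ℝ) : Set (n → ℝ) :=
  {p | p ⬝ᵥ p = 1 ∧ ∀ r : n → ℝ, r ⬝ᵥ r = 1 → p ⬝ᵥ (μ *ᵥ p) ≤ r ⬝ᵥ (μ *ᵥ r)}

lemma Matrix.dotProduct_sub_smul_one_mulVec [DecidableEq n] (w : n → ℝ) :
    w ⬝ᵥ ((μ - lam • 1) *ᵥ w) = w ⬝ᵥ (μ *ᵥ w) - lam * (w ⬝ᵥ w) := by
  rw [sub_mulVec, smul_mulVec, one_mulVec, dotProduct_sub, dotProduct_smul, smul_eq_mul]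

namespace Matrix.IsHermitian

lemma posSemidef_sub_smul_one [DecidableEq n] (hμ : μ.IsHermitian)
    (hmin : ∀ (c : ℝ) (w : n → ℝ), w ≠ 0 → μ *ᵥ w = c • w → lam ≤ c) :
    (μ - lam • 1).PosSemidef := by
  have hA : (μ - lam • 1).IsHermitian := hμ.sub (isHermitian_one.smul (.all lam))
  refine hA.posSemidef_iff_eigenvalues_nonneg.mpr fun i => ?_
  set v := ⇑(hA.eigenvectorBasis i)
  have hv : v ≠ 0 := fun h =>
    hA.eigenvectorBasis.orthonormal.ne_zero i (by ext j; exact congrFun h j)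
  have hμv : μ *ᵥ v = (hA.eigenvalues i + lam) • v := by
    have := hA.mulVec_eigenvectorBasis i
    rw [sub_mulVec, smul_mulVec, one_mulVec, sub_eq_iff_eq_add] at this
    rw [this, add_smul]
  simpa using hmin _ v hv hμv

lemma mul_dotProduct_self_le (hμ : μ.IsHermitian)
    (hmin : ∀ (c : ℝ) (w : n → ℝ), w ≠ 0 → μ *ᵥ w = c • w → lam ≤ c) (w : n → ℝ) :
    lam * (w ⬝ᵥ w) ≤ w ⬝ᵥ (μ *ᵥ w) := by
  classical
  have := (hμ.posSemidef_sub_smul_one hmin).dotProduct_mulVec_nonneg w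
  rw [star_trivial, dotProduct_sub_smul_one_mulVec] at this
  linarith

lemma mulVec_eq_smul_of_dotProduct_mulVec_eq (hμ : μ.IsHermitian)
    (hmin : ∀ (c : ℝ) (w : n → ℝ), w ≠ 0 → μ *ᵥ w = c • w → lam ≤ c) {w : n → ℝ}
    (h : w ⬝ᵥ (μ *ᵥ w) = lam * (w ⬝ᵥ w)) : μ *ᵥ w = lam • w := by
  classical
  have hzero := (hμ.posSemidef_sub_smul_one hmin).dotProduct_mulVec_zero_iff w
  rw [star_trivial, dotProduct_sub_smul_one_mulVec, h, sub_self, sub_mulVec, smul_mulVec,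
    one_mulVec, sub_eq_zero] at hzero
  exact hzero.mp rfl

end Matrix.IsHermitian

lemma eq_or_eq_neg_of_eq_smul {w γ : n → ℝ} {c : ℝ}
    (hw : w ⬝ᵥ w = 1) (hγ : γ ⬝ᵥ γ = 1) (h : w = c • γ) : w = γ ∨ w = -γ := by
  subst h
  have hc : c * c = 1 := by
    simpa [smul_dotProduct, dotProduct_smul, hγ, mul_assoc] using hw
  rcases mul_self_eq_one_iff.mp hc with rfl | rfl
  · exact .inl (one_smul ℝ γ)
  · exact .inr (neg_one_smul ℝ γ)

lemma rayleighArgmin_eq_pair {γ : n → ℝ} (hμ : μ.IsHermitian) (hγ : γ ⬝ᵥ γ = 1)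
    (heig : μ *ᵥ γ = lam • γ)
    (hmin : ∀ (c : ℝ) (w : n → ℝ), w ≠ 0 → μ *ᵥ w = c • w → lam ≤ c)
    (hsimple : ∀ w : n → ℝ, μ *ᵥ w = lam • w → ∃ c : ℝ, w = c • γ) :
    rayleighArgmin μ = {γ, -γ} := by
  have hlow (w : n → ℝ) (hw : w ⬝ᵥ w = 1) : lam ≤ w ⬝ᵥ (μ *ᵥ w) := by
    simpa [hw] using hμ.mul_dotProduct_self_le hmin w
  have hval (w : n → ℝ) (hw : w = γ ∨ w = -γ) : w ⬝ᵥ (μ *ᵥ w) = lam := by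
    rcases hw with rfl | rfl <;> simp [mulVec_neg, heig, hγ]
  ext p
  constructor
  · rintro ⟨hp, hle⟩
    have hpl : p ⬝ᵥ (μ *ᵥ p) = lam * (p ⬝ᵥ p) := by
      rw [hp, mul_one]
      linarith [hle γ hγ, hval γ (.inl rfl), hlow p hp]
    obtain ⟨c, hc⟩ := hsimple p (hμ.mulVec_eq_smul_of_dotProduct_mulVec_eq hmin hpl)
    exact eq_or_eq_neg_of_eq_smul hp hγ hc
  · intro hp
    have hp1 : p ⬝ᵥ p = 1 := by rcases hp with rfl | rfl <;> simp [hγ]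
    exact ⟨hp1, fun r hr => hval p hp ▸ hlow r hr⟩

lemma setOf_vw_farthest_eq_image_rayleighArgmin (μ : Matrix n n ℝ) :
    {B : Matrix n n ℝ | ∃ x : n → ℝ, x ⬝ᵥ x = 1 ∧ B = vecMulVec x x ∧ ∀ y : n → ℝ,
        y ⬝ᵥ y = 1 → trace ((vecMulVec y y - μ) * (vecMulVec y y - μ))
          ≤ trace ((vecMulVec x x - μ) * (vecMulVec x x - μ))}
      = (fun x => vecMulVec x x) '' rayleighArgmin μ := by
  have hiff {x y : n → ℝ} (hx : x ⬝ᵥ x = 1) (hy : y ⬝ᵥ y = 1) :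
      trace ((vecMulVec y y - μ) * (vecMulVec y y - μ))
          ≤ trace ((vecMulVec x x - μ) * (vecMulVec x x - μ))
        ↔ x ⬝ᵥ (μ *ᵥ x) ≤ y ⬝ᵥ (μ *ᵥ y) := by
    rw [trace_sq_vecMulVec_sub, trace_sq_vecMulVec_sub, hx, hy]
    constructor <;> intro h <;> linarith
  ext B
  constructor
  · rintro ⟨x, hx, rfl, hmax⟩
    exact ⟨x, ⟨hx, fun y hy => (hiff hx hy).mp (hmax y hy)⟩, rfl⟩
  · rintro ⟨x, ⟨hx, hmin⟩, rfl⟩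
    exact ⟨x, hx, rfl, fun y hy => (hiff hx hy).mpr (hmin y hy)⟩

end Rayleigh

section SecondMoment

variable {ι : Type*} [Fintype ι] (Q : Measure {x : ι → ℝ // x ⬝ᵥ x = 1})

noncomputable def secondMoment : Matrix ι ι ℝ := of fun i j => ∫ x, x.1 i * x.1 j ∂Q

lemma secondMoment_isHermitian : (secondMoment Q).IsHermitian := by
  ext i j
  simp [secondMoment, mul_comm]

lemma abs_apply_le_one_of_dotProduct_self_eq_one {x : ι → ℝ} (hx : x ⬝ᵥ x = 1) (i : ι) :
    |x i| ≤ 1 := by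
  rw [abs_le_one_iff_mul_self_le_one, ← hx]
  exact Finset.single_le_sum (fun k _ => mul_self_nonneg (x k)) (Finset.mem_univ i)

lemma dotProduct_sq_eq_sum (p x : ι → ℝ) :
    (p ⬝ᵥ x) ^ 2 = ∑ i, ∑ j, p i * p j * (x i * x j) := by
  simp only [sq, dotProduct, Finset.sum_mul_sum]
  exact Finset.sum_congr rfl fun i _ => Finset.sum_congr rfl fun j _ => by ring

variable [IsFiniteMeasure Q]

lemma integrable_apply_mul_apply (i j : ι) :
    Integrable (fun x : {x : ι → ℝ // x ⬝ᵥ x = 1} => x.1 i * x.1 j) Q := by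
  refine (integrable_const (1 : ℝ)).mono'
    (((measurable_pi_apply i).comp measurable_subtype_coe).mul
      ((measurable_pi_apply j).comp measurable_subtype_coe)).aestronglyMeasurable
    (.of_forall fun x => ?_)
  rw [Real.norm_eq_abs, abs_mul]
  exact mul_le_one₀ (abs_apply_le_one_of_dotProduct_self_eq_one x.2 i) (abs_nonneg _)
    (abs_apply_le_one_of_dotProduct_self_eq_one x.2 j)

lemma integrable_dotProduct_sq (p : ι → ℝ) :
    Integrable (fun x : {x : ι → ℝ // x ⬝ᵥ x = 1} => (p ⬝ᵥ x.1) ^ 2) Q := by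
  simp_rw [dotProduct_sq_eq_sum]
  exact integrable_finsetSum _ fun i _ => integrable_finsetSum _ fun j _ =>
    (integrable_apply_mul_apply Q i j).const_mul _

lemma integral_dotProduct_sq (p : ι → ℝ) :
    ∫ x, (p ⬝ᵥ x.1) ^ 2 ∂Q = p ⬝ᵥ (secondMoment Q *ᵥ p) := by
  simp_rw [dotProduct_sq_eq_sum]
  rw [integral_finsetSum _ fun i _ => integrable_finsetSum _ fun j _ =>
    (integrable_apply_mul_apply Q i j).const_mul _]
  simp_rw [integral_finsetSum _ fun j _ => (integrable_apply_mul_apply Q _ j).const_mul _,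
    integral_const_mul]
  simp only [dotProduct, mulVec, secondMoment, of_apply, Finset.mul_sum]
  exact Finset.sum_congr rfl fun i _ => Finset.sum_congr rfl fun j _ => by ring

lemma integral_trace_sq_vecMulVec_sub [IsProbabilityMeasure Q] {p : ι → ℝ}
    (hp : p ⬝ᵥ p = 1) :
    ∫ x, trace ((vecMulVec p p - vecMulVec x.1 x.1) * (vecMulVec p p - vecMulVec x.1 x.1)) ∂Q
      = 2 - 2 * (p ⬝ᵥ (secondMoment Q *ᵥ p)) := by
  have hpoint (x : {x : ι → ℝ // x ⬝ᵥ x = 1}) :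
      trace ((vecMulVec p p - vecMulVec x.1 x.1) * (vecMulVec p p - vecMulVec x.1 x.1))
        = 2 - 2 * (p ⬝ᵥ x.1) ^ 2 := by
    rw [trace_sq_vecMulVec_sub_vecMulVec, hp, x.2]
    ring
  simp_rw [hpoint]
  rw [integral_sub (integrable_const _) ((integrable_dotProduct_sq Q p).const_mul 2),
    integral_const_mul, integral_dotProduct_sq]
  simp

lemma setOf_vw_antimean_eq_rayleighArgmin [IsProbabilityMeasure Q] :
    {p : ι → ℝ | p ⬝ᵥ p = 1 ∧ ∀ r : ι → ℝ, r ⬝ᵥ r = 1 →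
        (∫ x, trace ((vecMulVec r r - vecMulVec x.1 x.1) *
            (vecMulVec r r - vecMulVec x.1 x.1)) ∂Q)
          ≤ ∫ x, trace ((vecMulVec p p - vecMulVec x.1 x.1) *
            (vecMulVec p p - vecMulVec x.1 x.1)) ∂Q}
      = rayleighArgmin (secondMoment Q) := by
  ext p
  refine and_congr_right fun hp => forall₂_congr fun r hr => ?_
  rw [integral_trace_sq_vecMulVec_sub Q hr, integral_trace_sq_vecMulVec_sub Q hp]
  constructor <;> intro h <;> linarith

end SecondMoment

/-- Let `Q` be a probability measure on the unit sphere `S^m ⊂ ℝ^{m+1}`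
whose second moment matrix `μ = ∫ x xᵀ dQ` has a simple smallest eigenvalue `λ(1)`
with unit eigenvector `γ(1)`. Then the set of unit vectors maximizing the Fréchet
function `F(p) = ∫ ‖p pᵀ - x xᵀ‖₀² dQ` is exactly `{γ(1), -γ(1)}`; i.e. `Q` is
α-VW-nonfocal with unique VW antimean `αμ_{j,E}(Q) = [γ(1)] = j⁻¹(P_{F,j}(μ))`,
the unique farthest point of `j(ℝP^m)` from `μ` being `γ(1) γ(1)ᵀ`. -/
theorem vw_antimean_unique (m : ℕ)
    (Q : Measure {x : Fin (m + 1) → ℝ // x ⬝ᵥ x = 1}) [IsProbabilityMeasure Q]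
    (μ : Matrix (Fin (m + 1)) (Fin (m + 1)) ℝ)
    (hμ : ∀ i j, μ i j = ∫ x, (x : {x : Fin (m + 1) → ℝ // x ⬝ᵥ x = 1}).1 i * x.1 j ∂Q)
    (lam : ℝ) (γ : Fin (m + 1) → ℝ) (hγ : γ ⬝ᵥ γ = 1) (heig : μ *ᵥ γ = lam • γ)
    (hmin : ∀ (c : ℝ) (w : Fin (m + 1) → ℝ), w ≠ 0 → μ *ᵥ w = c • w → lam ≤ c)
    (hsimple : ∀ w : Fin (m + 1) → ℝ, μ *ᵥ w = lam • w → ∃ c : ℝ, w = c • γ) :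
    {p : Fin (m + 1) → ℝ | p ⬝ᵥ p = 1 ∧ ∀ r : Fin (m + 1) → ℝ, r ⬝ᵥ r = 1 →
        (∫ x, Matrix.trace ((vecMulVec r r - vecMulVec x.1 x.1) *
            (vecMulVec r r - vecMulVec x.1 x.1)) ∂Q)
          ≤ ∫ x, Matrix.trace ((vecMulVec p p - vecMulVec x.1 x.1) *
            (vecMulVec p p - vecMulVec x.1 x.1)) ∂Q} = {γ, -γ} ∧
    {B : Matrix (Fin (m + 1)) (Fin (m + 1)) ℝ | ∃ x : Fin (m + 1) → ℝ, x ⬝ᵥ x = 1 ∧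
        B = vecMulVec x x ∧ ∀ y : Fin (m + 1) → ℝ, y ⬝ᵥ y = 1 →
          Matrix.trace ((vecMulVec y y - μ) * (vecMulVec y y - μ))
            ≤ Matrix.trace ((vecMulVec x x - μ) * (vecMulVec x x - μ))}
      = {vecMulVec γ γ} := by
  obtain rfl : μ = secondMoment Q := ext hμ
  have hargmin := rayleighArgmin_eq_pair (secondMoment_isHermitian Q) hγ heig hmin hsimple
  refine ⟨?_, ?_⟩
  · rw [setOf_vw_antimean_eq_rayleighArgmin, hargmin]
  · rw [setOf_vw_farthest_eq_image_rayleighArgmin, hargmin, Set.image_pair, neg_vecMulVec,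
      vecMulVec_neg, neg_neg, Set.pair_eq_singleton]
end

section
/- Let z₁, …, z_n be unit vectors in ℂ^{k−1} and let J = n⁻¹ Σ_{i=1}^n z_i z_i*. Then a unit vector w maximizes w ↦ n⁻¹ Σ_{i=1}^n ‖w w* − z_i z_i*‖₀² over unit vectors if and only if w is an eigenvector of J for its smallest eigenvalue; if that eigenvalue is simple with unit eigenvector m, the maximizer set is {ζ m : ζ ∈ ℂ, |ζ| = 1}, i.e., the sample VW antimean is α X̄_E = [m] ∈ ℂP^{k−2}. -/
/-!
For unit vectors `u`, `v` one has `‖u u* - v v*‖₀² = 2 - 2 |v* u|²`, so on the unit sphere the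
Fréchet function equals a constant minus `2 u* J u`. Maximizing it therefore means minimizing the
Rayleigh quotient of the Hermitian matrix `J`. If `λ` is a lower bound for the eigenvalues of `J`,
then `J - λ` is positive semidefinite, whence `λ ≤ u* J u` on the unit sphere, with equality
exactly when `(J - λ) u = 0`. So the maximizers are the unit eigenvectors for the least
eigenvalue, and when that eigenspace is a line spanned by `m` they are the `ζ m` with `|ζ| = 1`.
-/

open Matrix

open scoped ComplexOrder MatrixOrder

namespace Matrix

variable {𝕜 ι : Type*} [RCLike 𝕜]

section Rayleigh

variable [Fintype ι]

def IsEigenvalueLowerBound (A : Matrix ι ι 𝕜) (lam : ℝ) : Prop :=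
  ∀ (c : ℝ) (v : ι → 𝕜), v ≠ 0 → A *ᵥ v = (c : 𝕜) • v → lam ≤ c

lemma ne_zero_of_star_dotProduct_self_eq_one {v : ι → 𝕜} (hv : star v ⬝ᵥ v = 1) : v ≠ 0 := by
  rintro rfl
  simp at hv

lemma star_smul_dotProduct_smul (c : 𝕜) (v : ι → 𝕜) :
    star (c • v) ⬝ᵥ (c • v) = (‖c‖ ^ 2 : ℝ) * (star v ⬝ᵥ v) := by
  rw [star_smul, smul_dotProduct, dotProduct_smul, smul_smul, smul_eq_mul, RCLike.star_def,
    RCLike.conj_mul, RCLike.ofReal_pow]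

lemma star_smul_dotProduct_smul_eq_one_iff {c : 𝕜} {v : ι → 𝕜} (hv : star v ⬝ᵥ v = 1) :
    star (c • v) ⬝ᵥ (c • v) = 1 ↔ ‖c‖ = 1 := by
  rw [star_smul_dotProduct_smul, hv, mul_one, ← RCLike.ofReal_one, RCLike.ofReal_inj,
    pow_eq_one_iff_of_nonneg (norm_nonneg c) two_ne_zero]

variable [DecidableEq ι] {A : Matrix ι ι 𝕜} {lam : ℝ}

lemma star_dotProduct_sub_smul_one_mulVec (A : Matrix ι ι 𝕜) (lam : ℝ) (u : ι → 𝕜) :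
    star u ⬝ᵥ (A - lam • 1) *ᵥ u = star u ⬝ᵥ A *ᵥ u - lam * (star u ⬝ᵥ u) := by
  rw [sub_mulVec, dotProduct_sub, smul_mulVec, one_mulVec, dotProduct_smul,
    RCLike.real_smul_eq_coe_smul (K := 𝕜), smul_eq_mul]

lemma IsHermitian.star_eigenvectorBasis_dotProduct_self (hA : A.IsHermitian) (i : ι) :
    star ⇑(hA.eigenvectorBasis i) ⬝ᵥ ⇑(hA.eigenvectorBasis i) = 1 := by
  rw [dotProduct_comm, ← EuclideanSpace.inner_eq_star_dotProduct,
    orthonormal_iff_ite.1 hA.eigenvectorBasis.orthonormal i i, if_pos rfl]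

lemma IsHermitian.mulVec_eigenvectorBasis_eq_coe_smul (hA : A.IsHermitian) (i : ι) :
    A *ᵥ ⇑(hA.eigenvectorBasis i) = (hA.eigenvalues i : 𝕜) • ⇑(hA.eigenvectorBasis i) := by
  rw [hA.mulVec_eigenvectorBasis, RCLike.real_smul_eq_coe_smul (K := 𝕜)]

lemma IsHermitian.posSemidef_sub_smul_one_of_le_eigenvalues (hA : A.IsHermitian)
    (hlam : ∀ i, lam ≤ hA.eigenvalues i) : (A - lam • 1).PosSemidef := by
  have h := (algebraMap_le_iff_le_spectrum (a := A) (r := lam) hA.isSelfAdjoint).2 (by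
    rw [hA.spectrum_real_eq_range_eigenvalues]
    rintro _ ⟨i, rfl⟩
    exact hlam i)
  rwa [Algebra.algebraMap_eq_smul_one, le_iff] at h

lemma IsHermitian.posSemidef_sub_smul_one_iff (hA : A.IsHermitian) :
    (A - lam • 1).PosSemidef ↔ IsEigenvalueLowerBound A lam := by
  refine ⟨fun hP c v hv hAv => ?_,
    fun hlam => hA.posSemidef_sub_smul_one_of_le_eigenvalues fun i => ?_⟩
  · have hv_pos : 0 < RCLike.re (star v ⬝ᵥ v) :=
      (RCLike.pos_iff.1 (dotProduct_star_self_pos_iff.2 hv)).1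
    have h := (RCLike.nonneg_iff.1 (hP.dotProduct_mulVec_nonneg v)).1
    rw [star_dotProduct_sub_smul_one_mulVec, hAv, dotProduct_smul, smul_eq_mul, ← sub_mul,
      ← RCLike.ofReal_sub, RCLike.re_ofReal_mul] at h
    exact sub_nonneg.1 (nonneg_of_mul_nonneg_left h hv_pos)
  · exact hlam _ _
      (ne_zero_of_star_dotProduct_self_eq_one (hA.star_eigenvectorBasis_dotProduct_self i))
      (hA.mulVec_eigenvectorBasis_eq_coe_smul i)

lemma IsHermitian.exists_unit_eigenvector_isEigenvalueLowerBound [Nonempty ι]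
    (hA : A.IsHermitian) :
    ∃ (lam : ℝ) (e : ι → 𝕜), star e ⬝ᵥ e = 1 ∧ A *ᵥ e = (lam : 𝕜) • e ∧
      IsEigenvalueLowerBound A lam := by
  obtain ⟨i, -, hi⟩ := Finset.univ.exists_min_image hA.eigenvalues Finset.univ_nonempty
  exact ⟨hA.eigenvalues i, hA.eigenvectorBasis i, hA.star_eigenvectorBasis_dotProduct_self i,
    hA.mulVec_eigenvectorBasis_eq_coe_smul i, hA.posSemidef_sub_smul_one_iff.1
      (hA.posSemidef_sub_smul_one_of_le_eigenvalues fun j => hi j (Finset.mem_univ j))⟩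

lemma PosSemidef.le_re_star_dotProduct_mulVec (hP : (A - lam • 1).PosSemidef) {u : ι → 𝕜}
    (hu : star u ⬝ᵥ u = 1) : lam ≤ RCLike.re (star u ⬝ᵥ A *ᵥ u) := by
  have h := (RCLike.nonneg_iff.1 (hP.dotProduct_mulVec_nonneg u)).1
  rw [star_dotProduct_sub_smul_one_mulVec, hu, mul_one, map_sub, RCLike.ofReal_re] at h
  linarith

lemma PosSemidef.re_star_dotProduct_mulVec_eq_iff (hP : (A - lam • 1).PosSemidef) {u : ι → 𝕜}
    (hu : star u ⬝ᵥ u = 1) :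
    RCLike.re (star u ⬝ᵥ A *ᵥ u) = lam ↔ A *ᵥ u = (lam : 𝕜) • u := by
  have h := hP.dotProduct_mulVec_zero_iff u
  rw [star_dotProduct_sub_smul_one_mulVec, hu, mul_one, sub_mulVec, smul_mulVec, one_mulVec,
    RCLike.real_smul_eq_coe_smul (K := 𝕜), sub_eq_zero, sub_eq_zero] at h
  have him := (RCLike.nonneg_iff.1 (hP.dotProduct_mulVec_nonneg u)).2
  rw [star_dotProduct_sub_smul_one_mulVec, hu, mul_one, map_sub, RCLike.ofReal_im,
    sub_zero] at him
  rw [← h, RCLike.ext_iff (z := star u ⬝ᵥ A *ᵥ u), RCLike.ofReal_re, RCLike.ofReal_im, him]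
  exact (and_iff_left rfl).symm

theorem IsHermitian.isMinOn_iff_mulVec_eq (hA : A.IsHermitian)
    (hlam : IsEigenvalueLowerBound A lam) {m w : ι → 𝕜} (hm : star m ⬝ᵥ m = 1)
    (hAm : A *ᵥ m = (lam : 𝕜) • m) (hw : star w ⬝ᵥ w = 1) :
    IsMinOn (fun u => RCLike.re (star u ⬝ᵥ A *ᵥ u)) {u | star u ⬝ᵥ u = 1} w ↔
      A *ᵥ w = (lam : 𝕜) • w := by
  have hP := hA.posSemidef_sub_smul_one_iff.2 hlam
  rw [← hP.re_star_dotProduct_mulVec_eq_iff hw, isMinOn_iff]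
  refine ⟨fun hmin => le_antisymm ?_ (hP.le_re_star_dotProduct_mulVec hw), fun hq u hu => ?_⟩
  · exact (hmin m hm).trans ((hP.re_star_dotProduct_mulVec_eq_iff hm).2 hAm).le
  · exact hq ▸ hP.le_re_star_dotProduct_mulVec hu

theorem IsHermitian.isMinOn_iff_exists_isEigenvalueLowerBound (hA : A.IsHermitian)
    {w : ι → 𝕜} (hw : star w ⬝ᵥ w = 1) :
    IsMinOn (fun u => RCLike.re (star u ⬝ᵥ A *ᵥ u)) {u | star u ⬝ᵥ u = 1} w ↔
      ∃ lam : ℝ, A *ᵥ w = (lam : 𝕜) • w ∧ IsEigenvalueLowerBound A lam := by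
  have : Nonempty ι := ⟨(Function.ne_iff.1 (ne_zero_of_star_dotProduct_self_eq_one hw)).choose⟩
  obtain ⟨μ, e, he, hAe, hμ⟩ := hA.exists_unit_eigenvector_isEigenvalueLowerBound
  refine ⟨fun hmin => ⟨μ, (hA.isMinOn_iff_mulVec_eq hμ he hAe hw).1 hmin, hμ⟩, ?_⟩
  rintro ⟨lam, hAw, hlam⟩
  exact (hA.isMinOn_iff_mulVec_eq hlam hw hAw hw).2 hAw

theorem IsHermitian.setOf_isMinOn_eq (hA : A.IsHermitian)
    (hlam : IsEigenvalueLowerBound A lam) {m : ι → 𝕜} (hm : star m ⬝ᵥ m = 1)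
    (hAm : A *ᵥ m = (lam : 𝕜) • m)
    (hline : ∀ v, A *ᵥ v = (lam : 𝕜) • v → ∃ c : 𝕜, v = c • m) :
    {w | star w ⬝ᵥ w = 1 ∧
        IsMinOn (fun u => RCLike.re (star u ⬝ᵥ A *ᵥ u)) {u | star u ⬝ᵥ u = 1} w} =
      {w | ∃ ζ : 𝕜, ‖ζ‖ = 1 ∧ w = ζ • m} := by
  ext w
  constructor
  · rintro ⟨hw, hmin⟩
    obtain ⟨c, rfl⟩ := hline w ((hA.isMinOn_iff_mulVec_eq hlam hm hAm hw).1 hmin)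
    exact ⟨c, (star_smul_dotProduct_smul_eq_one_iff hm).1 hw, rfl⟩
  · rintro ⟨ζ, hζ, rfl⟩
    have hw := (star_smul_dotProduct_smul_eq_one_iff hm).2 hζ
    refine ⟨hw, (hA.isMinOn_iff_mulVec_eq hlam hm hAm hw).2 ?_⟩
    rw [mulVec_smul, hAm, smul_comm]

end Rayleigh

section VeroneseWhitney

variable {n : ℕ}

noncomputable def vwEmbeddedMean (z : Fin n → ι → 𝕜) : Matrix ι ι 𝕜 :=
  (n : ℝ)⁻¹ • ∑ i, vecMulVec (z i) (star (z i))

lemma isHermitian_vwEmbeddedMean (z : Fin n → ι → 𝕜) : (vwEmbeddedMean z).IsHermitian := by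
  simp only [IsHermitian, vwEmbeddedMean, conjTranspose_smul, conjTranspose_sum,
    conjTranspose_vecMulVec, star_star, star_trivial]

variable [Fintype ι]

noncomputable def vwFrechet (z : Fin n → ι → 𝕜) (u : ι → 𝕜) : ℝ :=
  (n : ℝ)⁻¹ * ∑ i, RCLike.re (trace ((vecMulVec u (star u) - vecMulVec (z i) (star (z i))) *
    (vecMulVec u (star u) - vecMulVec (z i) (star (z i)))ᴴ))

lemma trace_vecMulVec_star_mul_vecMulVec_star (a b : ι → 𝕜) :
    trace (vecMulVec a (star a) * vecMulVec b (star b)) = (‖star b ⬝ᵥ a‖ ^ 2 : ℝ) := by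
  rw [vecMulVec_mul_vecMulVec, trace_vecMulVec, dotProduct_smul, smul_eq_mul, dotProduct_comm a,
    star_dotProduct a b, RCLike.star_def, RCLike.conj_mul, RCLike.ofReal_pow]

lemma re_trace_sub_vecMulVec_star_mul_conjTranspose {u v : ι → 𝕜} (hu : star u ⬝ᵥ u = 1)
    (hv : star v ⬝ᵥ v = 1) :
    RCLike.re (trace ((vecMulVec u (star u) - vecMulVec v (star v)) *
      (vecMulVec u (star u) - vecMulVec v (star v))ᴴ)) = 2 - 2 * ‖star v ⬝ᵥ u‖ ^ 2 := by
  rw [conjTranspose_sub, conjTranspose_vecMulVec, conjTranspose_vecMulVec, star_star, star_star,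
    sub_mul, mul_sub, mul_sub, trace_sub, trace_sub, trace_sub]
  simp only [trace_vecMulVec_star_mul_vecMulVec_star, hu, hv, star_dotProduct u v, norm_star,
    norm_one, map_sub, RCLike.ofReal_re]
  ring

lemma star_dotProduct_vecMulVec_star_mulVec (a u : ι → 𝕜) :
    star u ⬝ᵥ vecMulVec a (star a) *ᵥ u = (‖star a ⬝ᵥ u‖ ^ 2 : ℝ) := by
  rw [vecMulVec_mulVec, op_smul_eq_smul, dotProduct_smul, smul_eq_mul, star_dotProduct u a,
    RCLike.star_def, RCLike.mul_conj, RCLike.ofReal_pow]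

lemma re_star_dotProduct_vwEmbeddedMean_mulVec (z : Fin n → ι → 𝕜) (u : ι → 𝕜) :
    RCLike.re (star u ⬝ᵥ vwEmbeddedMean z *ᵥ u) = (n : ℝ)⁻¹ * ∑ i, ‖star (z i) ⬝ᵥ u‖ ^ 2 := by
  simp only [vwEmbeddedMean, smul_mulVec, sum_mulVec, dotProduct_smul, dotProduct_sum,
    star_dotProduct_vecMulVec_star_mulVec, RCLike.smul_re, map_sum, RCLike.ofReal_re]

-- `n⁻¹ * n` is `0`, not `1`, when `n = 0`.
lemma vwFrechet_eq {z : Fin n → ι → 𝕜} (hz : ∀ i, star (z i) ⬝ᵥ z i = 1) {u : ι → 𝕜}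
    (hu : star u ⬝ᵥ u = 1) :
    vwFrechet z u = 2 * ((n : ℝ)⁻¹ * n) - 2 * RCLike.re (star u ⬝ᵥ vwEmbeddedMean z *ᵥ u) := by
  simp only [vwFrechet, re_star_dotProduct_vwEmbeddedMean_mulVec,
    re_trace_sub_vecMulVec_star_mul_conjTranspose hu (hz _), Finset.sum_sub_distrib,
    ← Finset.mul_sum, Finset.sum_const, Finset.card_univ, Fintype.card_fin, nsmul_eq_mul]
  ring

lemma isMaxOn_vwFrechet_iff {z : Fin n → ι → 𝕜} (hz : ∀ i, star (z i) ⬝ᵥ z i = 1)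
    {w : ι → 𝕜} (hw : star w ⬝ᵥ w = 1) :
    IsMaxOn (vwFrechet z) {u | star u ⬝ᵥ u = 1} w ↔
      IsMinOn (fun u => RCLike.re (star u ⬝ᵥ vwEmbeddedMean z *ᵥ u)) {u | star u ⬝ᵥ u = 1} w := by
  rw [isMaxOn_iff, isMinOn_iff]
  refine forall₂_congr fun u hu => ?_
  rw [vwFrechet_eq hz hu, vwFrechet_eq hz hw]
  constructor <;> intro h <;> linarith

end VeroneseWhitney

end Matrix

theorem vw_sample_antimean_complex_general (k n : ℕ)
    (z : Fin n → Fin (k - 1) → ℂ) (hz : ∀ i, star (z i) ⬝ᵥ z i = 1)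
    (J : Matrix (Fin (k - 1)) (Fin (k - 1)) ℂ)
    (hJ : J = (n : ℝ)⁻¹ • ∑ i, vecMulVec (z i) (star (z i))) :
    (∀ w : Fin (k - 1) → ℂ, star w ⬝ᵥ w = 1 →
      ((∀ u : Fin (k - 1) → ℂ, star u ⬝ᵥ u = 1 →
          (n : ℝ)⁻¹ * ∑ i, (Matrix.trace
              ((vecMulVec u (star u) - vecMulVec (z i) (star (z i))) *
               (vecMulVec u (star u) - vecMulVec (z i) (star (z i)))ᴴ)).re
            ≤ (n : ℝ)⁻¹ * ∑ i, (Matrix.trace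
              ((vecMulVec w (star w) - vecMulVec (z i) (star (z i))) *
               (vecMulVec w (star w) - vecMulVec (z i) (star (z i)))ᴴ)).re) ↔
        (∃ lam : ℝ, J *ᵥ w = (lam : ℂ) • w ∧
          ∀ (c : ℝ) (v : Fin (k - 1) → ℂ), v ≠ 0 → J *ᵥ v = (c : ℂ) • v → lam ≤ c))) ∧
    (∀ (lam : ℝ) (mv : Fin (k - 1) → ℂ), star mv ⬝ᵥ mv = 1 →
      J *ᵥ mv = (lam : ℂ) • mv →
      (∀ (c : ℝ) (v : Fin (k - 1) → ℂ), v ≠ 0 → J *ᵥ v = (c : ℂ) • v → lam ≤ c) →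
      (∀ v : Fin (k - 1) → ℂ, J *ᵥ v = (lam : ℂ) • v → ∃ c : ℂ, v = c • mv) →
      {w : Fin (k - 1) → ℂ | star w ⬝ᵥ w = 1 ∧ ∀ u : Fin (k - 1) → ℂ, star u ⬝ᵥ u = 1 →
          (n : ℝ)⁻¹ * ∑ i, (Matrix.trace
              ((vecMulVec u (star u) - vecMulVec (z i) (star (z i))) *
               (vecMulVec u (star u) - vecMulVec (z i) (star (z i)))ᴴ)).re
            ≤ (n : ℝ)⁻¹ * ∑ i, (Matrix.trace
              ((vecMulVec w (star w) - vecMulVec (z i) (star (z i))) *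
               (vecMulVec w (star w) - vecMulVec (z i) (star (z i)))ᴴ)).re}
        = {w : Fin (k - 1) → ℂ | ∃ ζ : ℂ, ‖ζ‖ = 1 ∧ w = ζ • mv}) := by
  have hJh : J.IsHermitian := hJ ▸ isHermitian_vwEmbeddedMean z
  have hmax : ∀ w, star w ⬝ᵥ w = 1 →
      (IsMaxOn (vwFrechet z) {u | star u ⬝ᵥ u = 1} w ↔
        IsMinOn (fun u => RCLike.re (star u ⬝ᵥ J *ᵥ u)) {u | star u ⬝ᵥ u = 1} w) :=
    fun w hw => hJ ▸ isMaxOn_vwFrechet_iff hz hw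
  refine ⟨fun w hw => ?_, fun lam mv hmv hJm hlam hline => ?_⟩
  · exact (isMaxOn_iff.symm.trans (hmax w hw)).trans
      (hJh.isMinOn_iff_exists_isEigenvalueLowerBound hw)
  · refine (Set.ext fun w => and_congr_right fun hw => ?_).trans
      (hJh.setOf_isMinOn_eq hlam hmv hJm hline)
    exact isMaxOn_iff.symm.trans (hmax w hw)

/-- Let `z₁, …, zₙ` be unit vectors in `ℂ^{k-1}` and
`J = n⁻¹ Σᵢ zᵢ zᵢ*`. A unit vector `w` maximizes `w ↦ n⁻¹ Σᵢ ‖w w* - zᵢ zᵢ*‖₀²` over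
unit vectors iff `w` is an eigenvector of `J` for its smallest eigenvalue; if that
eigenvalue is simple with unit eigenvector `m`, the maximizer set is
`{ζ • m : |ζ| = 1}`, i.e. the sample VW antimean is `[m] ∈ ℂP^{k-2}`. -/
theorem vw_sample_antimean_complex (k n : ℕ) (hk : 2 ≤ k) (hn : 0 < n)
    (z : Fin n → Fin (k - 1) → ℂ) (hz : ∀ i, star (z i) ⬝ᵥ z i = 1)
    (J : Matrix (Fin (k - 1)) (Fin (k - 1)) ℂ)
    (hJ : J = (n : ℝ)⁻¹ • ∑ i, vecMulVec (z i) (star (z i))) :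
    (∀ w : Fin (k - 1) → ℂ, star w ⬝ᵥ w = 1 →
      ((∀ u : Fin (k - 1) → ℂ, star u ⬝ᵥ u = 1 →
          (n : ℝ)⁻¹ * ∑ i, (Matrix.trace
              ((vecMulVec u (star u) - vecMulVec (z i) (star (z i))) *
               (vecMulVec u (star u) - vecMulVec (z i) (star (z i)))ᴴ)).re
            ≤ (n : ℝ)⁻¹ * ∑ i, (Matrix.trace
              ((vecMulVec w (star w) - vecMulVec (z i) (star (z i))) *
               (vecMulVec w (star w) - vecMulVec (z i) (star (z i)))ᴴ)).re) ↔
        (∃ lam : ℝ, J *ᵥ w = (lam : ℂ) • w ∧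
          ∀ (c : ℝ) (v : Fin (k - 1) → ℂ), v ≠ 0 → J *ᵥ v = (c : ℂ) • v → lam ≤ c))) ∧
    (∀ (lam : ℝ) (mv : Fin (k - 1) → ℂ), star mv ⬝ᵥ mv = 1 →
      J *ᵥ mv = (lam : ℂ) • mv →
      (∀ (c : ℝ) (v : Fin (k - 1) → ℂ), v ≠ 0 → J *ᵥ v = (c : ℂ) • v → lam ≤ c) →
      (∀ v : Fin (k - 1) → ℂ, J *ᵥ v = (lam : ℂ) • v → ∃ c : ℂ, v = c • mv) →
      {w : Fin (k - 1) → ℂ | star w ⬝ᵥ w = 1 ∧ ∀ u : Fin (k - 1) → ℂ, star u ⬝ᵥ u = 1 →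
          (n : ℝ)⁻¹ * ∑ i, (Matrix.trace
              ((vecMulVec u (star u) - vecMulVec (z i) (star (z i))) *
               (vecMulVec u (star u) - vecMulVec (z i) (star (z i)))ᴴ)).re
            ≤ (n : ℝ)⁻¹ * ∑ i, (Matrix.trace
              ((vecMulVec w (star w) - vecMulVec (z i) (star (z i))) *
               (vecMulVec w (star w) - vecMulVec (z i) (star (z i)))ᴴ)).re}
        = {w : Fin (k - 1) → ℂ | ∃ ζ : ℂ, ‖ζ‖ = 1 ∧ w = ζ • mv}) :=
  vw_sample_antimean_complex_general k n z hz J hJ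
end
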